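/- For any non-backtracking path (v_0, …, v_k) in the universal covering tree T and z ∈ ℂ∖ℝ: G(v_0, v_k; z) = −(∏_{j=0}^{k−1} ζ^z(v_{j+1}, v_j)) / (2m^z(v_k)) = −(∏_{j=0}^{k−1} ζ^z(v_j, v_{j+1})) / (2m^z(v_0)). -/

import Mathlib

/-!
The adjacency operator `A` of a graph of bounded degree is symmetric on `ℓ²`, so for `z ∉ ℝ`
it has no `ℓ²` eigenfunction with eigenvalue `z`. This gives the symmetry of the Green function
and its vanishing between different components. If `{a, b}` is a bridge and `G'` is the Green
function of the graph without it, the resolvent identity `G = G' - G' (A - A') G`, evaluated at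
`(a, y)` for `y` on the side of `b`, reads `G(a, y) = -G'(a, a) G(b, y)`, since `G'(a, ·)`
vanishes on that side. In a tree every edge is a bridge and a non-backtracking path is a
geodesic, so `v_k` lies on the side of `v_1` of the edge `{v_0, v_1}`; induction along the path
gives the first formula, and the second is the first one for the reversed path, by symmetry
of `G`.
-/

open Finset

/-- `g` is the Green function of the adjacency operator of `T` at `z`. -/
def IsGreen {V : Type*} [DecidableEq V] (T : SimpleGraph V) [T.LocallyFinite]
    (z : ℂ) (g : V → V → ℂ) : Prop :=
  (∀ y : V, Summable fun x : V => ‖g x y‖ ^ 2) ∧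
  (∀ x y : V, (∑ u ∈ T.neighborFinset x, g u y) - z * g x y =
    if x = y then 1 else 0)

/-- `g` is the Green function of `T` with the single edge `{a, b}` removed. -/
def IsGreenDel {V : Type*} [DecidableEq V] (T : SimpleGraph V) [T.LocallyFinite]
    (a b : V) (z : ℂ) (g : V → V → ℂ) : Prop :=
  (∀ y : V, Summable fun x : V => ‖g x y‖ ^ 2) ∧
  (∀ x y : V, (∑ u ∈ T.neighborFinset x,
      if (x = a ∧ u = b) ∨ (x = b ∧ u = a) then 0 else g u y) - z * g x y =
    if x = y then 1 else 0)

theorem memℓp_two_iff {ι : Type*} {f : ι → ℂ} :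
    Memℓp f 2 ↔ Summable fun i => ‖f i‖ ^ 2 := by
  rw [memℓp_gen_iff (by norm_num)]
  norm_num

theorem Memℓp.summable_mul {ι : Type*} {f g : ι → ℂ} (hf : Memℓp f 2) (hg : Memℓp g 2) :
    Summable fun i => f i * g i := by
  refine .of_norm_bounded (memℓp_two_iff.1 hf |>.add (memℓp_two_iff.1 hg)) fun i => ?_
  rw [norm_mul]
  nlinarith [sq_nonneg (‖f i‖ - ‖g i‖)]

namespace SimpleGraph

section LocallyFinite

variable {V : Type*} {G : SimpleGraph V} [G.LocallyFinite] {D : ℕ}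

section

variable [DecidableRel G.Adj]

theorem tsum_ite_adj {M : Type*} [AddCommMonoid M] [TopologicalSpace M] (x : V) (f : V → M) :
    ∑' u, (if G.Adj x u then f u else 0) = ∑ u ∈ G.neighborFinset x, f u := by
  rw [tsum_eq_sum (s := G.neighborFinset x) fun u hu => if_neg (by simpa using hu)]
  exact sum_congr rfl fun u hu => if_pos (by simpa using hu)

theorem tsum_sum_neighborFinset_comm {F : V → V → ℂ}
    (hF : Summable fun p : V × V => if G.Adj p.1 p.2 then F p.1 p.2 else 0) :
    ∑' x, ∑ u ∈ G.neighborFinset x, F x u = ∑' x, ∑ u ∈ G.neighborFinset x, F u x := by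
  have hfin : ∀ x, Summable fun u => if G.Adj x u then F x u else 0 := fun x =>
    summable_of_ne_finset_zero (s := G.neighborFinset x) fun u hu => if_neg (by simpa using hu)
  have hfin' : ∀ u, Summable fun x => if G.Adj x u then F x u else 0 := fun u =>
    summable_of_ne_finset_zero (s := G.neighborFinset u) fun x hx =>
      if_neg (by simpa [adj_comm] using hx)
  simp_rw [← tsum_ite_adj]
  rw [← hF.tsum_comm' hfin hfin']
  simp_rw [adj_comm]

theorem summable_ite_adj {f : V → ℝ} (hD : ∀ x, G.degree x ≤ D) (hf : Summable f)
    (hf0 : ∀ x, 0 ≤ f x) : Summable fun p : V × V => if G.Adj p.1 p.2 then f p.1 else 0 := by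
  refine (summable_prod_of_nonneg fun p => ?_).2 ⟨fun x => ?_, ?_⟩
  · dsimp only; split_ifs <;> simp [hf0]
  · exact summable_of_ne_finset_zero (s := G.neighborFinset x) fun u hu =>
      if_neg (by simpa using hu)
  · simp_rw [tsum_ite_adj, sum_const, card_neighborFinset_eq_degree, nsmul_eq_mul]
    refine .of_nonneg_of_le (fun x => mul_nonneg (by positivity) (hf0 x)) (fun x => ?_)
      (hf.mul_left (D : ℝ))
    exact mul_le_mul_of_nonneg_right (by exact_mod_cast hD x) (hf0 x)

theorem summable_ite_adj_mul (hD : ∀ x, G.degree x ≤ D) {f g : V → ℂ} (hf : Memℓp f 2)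
    (hg : Memℓp g 2) : Summable fun p : V × V => if G.Adj p.1 p.2 then f p.1 * g p.2 else 0 := by
  have hleft := summable_ite_adj hD (memℓp_two_iff.1 hf) fun x => by positivity
  have hright := (summable_ite_adj hD (memℓp_two_iff.1 hg) fun x => by positivity).prod_symm
  refine .of_norm_bounded (hleft.add hright) fun p => ?_
  simp only [Prod.fst_swap, Prod.snd_swap, G.adj_comm p.2 p.1]
  split_ifs
  · rw [norm_mul]; nlinarith [sq_nonneg (‖f p.1‖ - ‖g p.2‖)]
  · simp

end

theorem tsum_mul_sum_neighborFinset_comm (hD : ∀ x, G.degree x ≤ D) {f g : V → ℂ}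
    (hf : Memℓp f 2) (hg : Memℓp g 2) :
    ∑' x, f x * ∑ u ∈ G.neighborFinset x, g u =
      ∑' x, (∑ u ∈ G.neighborFinset x, f u) * g x := by
  classical
  simp_rw [mul_sum, sum_mul]
  exact tsum_sum_neighborFinset_comm (summable_ite_adj_mul hD hf hg)

theorem eq_zero_of_sum_neighborFinset_eq_mul {z : ℂ} (hD : ∀ x, G.degree x ≤ D)
    (hz : z.im ≠ 0) {f : V → ℂ} (hf : Memℓp f 2)
    (heig : ∀ x, ∑ u ∈ G.neighborFinset x, f u = z * f x) : f = 0 := by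
  have key := tsum_mul_sum_neighborFinset_comm hD hf.star_mem hf
  have hconj : ∀ x, ∑ u ∈ G.neighborFinset x, starRingEnd ℂ (f u) =
      starRingEnd ℂ z * starRingEnd ℂ (f x) := fun x => by
    rw [← map_sum, heig, map_mul]
  simp only [Pi.star_apply, heig, hconj, Complex.star_def] at key
  -- `⟨f, A f⟩ = ⟨A f, f⟩` reads `z ‖f‖² = conj z ‖f‖²`
  set S := ∑' x, ‖f x‖ ^ 2
  have hS : (z - starRingEnd ℂ z) * S = 0 := by
    have h1 : ∑' x, starRingEnd ℂ (f x) * (z * f x) = z * S := by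
      simp_rw [mul_left_comm _ z, Complex.conj_mul', tsum_mul_left, S, Complex.ofReal_tsum]
      push_cast; rfl
    have h2 : ∑' x, starRingEnd ℂ z * starRingEnd ℂ (f x) * f x = starRingEnd ℂ z * S := by
      simp_rw [mul_assoc, Complex.conj_mul', tsum_mul_left, S, Complex.ofReal_tsum]
      push_cast; rfl
    rw [sub_mul, ← h1, ← h2, key, sub_self]
  have hS0 : S = 0 := by
    rw [Complex.sub_conj] at hS
    exact_mod_cast (mul_eq_zero.1 hS).resolve_left (by simp [hz])
  have hsum : HasSum (fun x => ‖f x‖ ^ 2) S := (memℓp_two_iff.1 hf).hasSum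
  rw [hS0, hasSum_zero_iff_of_nonneg fun x => by positivity] at hsum
  funext x
  simpa using congrFun hsum x

end LocallyFinite

section DeleteEdge

variable {V : Type*} [DecidableEq V] {G : SimpleGraph V} [G.LocallyFinite]

instance (e : Sym2 V) : (G.deleteEdges {e}).LocallyFinite := fun x =>
  Fintype.ofFinset ((G.neighborFinset x).filter fun u => s(x, u) ≠ e) fun u => by simp

theorem neighborFinset_deleteEdges_singleton (e : Sym2 V) (x : V) :
    (G.deleteEdges {e}).neighborFinset x = (G.neighborFinset x).filter fun u => s(x, u) ≠ e := by
  ext u; simp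

theorem degree_deleteEdges_singleton_le (e : Sym2 V) (x : V) :
    (G.deleteEdges {e}).degree x ≤ G.degree x := by
  simp only [← card_neighborFinset_eq_degree, neighborFinset_deleteEdges_singleton]
  exact card_filter_le _ _

theorem sum_neighborFinset_deleteEdges {M : Type*} [AddCommMonoid M] {a b : V} (hab : G.Adj a b)
    (x : V) (f : V → M) :
    ∑ u ∈ (G.deleteEdges {s(a, b)}).neighborFinset x, f u +
      ((if x = a then f b else 0) + (if x = b then f a else 0)) =
    ∑ u ∈ G.neighborFinset x, f u := by
  rw [neighborFinset_deleteEdges_singleton,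
    ← sum_filter_add_sum_filter_not (G.neighborFinset x) fun u => s(x, u) ≠ s(a, b)]
  congr 1
  simp only [ne_eq, not_not, Sym2.eq_iff]
  by_cases hxa : x = a
  · subst hxa
    have : {u ∈ G.neighborFinset x | x = x ∧ u = b ∨ x = b ∧ u = x} = {b} := by
      ext u; simp only [mem_filter, mem_neighborFinset, mem_singleton]; grind [hab.ne]
    rw [this, sum_singleton]
    simp [hab.ne]
  · by_cases hxb : x = b
    · subst hxb
      have : {u ∈ G.neighborFinset x | x = a ∧ u = x ∨ x = x ∧ u = a} = {a} := by
        ext u; simp only [mem_filter, mem_neighborFinset, mem_singleton]; grind [hab.symm]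
      rw [this, sum_singleton]
      simp [hxa]
    · simp [hxa, hxb]

end DeleteEdge

section NonBacktracking

variable {V : Type*} {G : SimpleGraph V}

def IsNonBacktracking (G : SimpleGraph V) (k : ℕ) (v : ℕ → V) : Prop :=
  (∀ j < k, G.Adj (v j) (v (j + 1))) ∧ ∀ j, j + 2 ≤ k → v (j + 2) ≠ v j

namespace IsNonBacktracking

variable {k : ℕ} {v : ℕ → V}

theorem tail (h : G.IsNonBacktracking (k + 1) v) : G.IsNonBacktracking k (fun j => v (j + 1)) :=
  ⟨fun j hj => h.1 (j + 1) (by omega), fun j hj => h.2 (j + 1) (by omega)⟩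

theorem reverse (h : G.IsNonBacktracking k v) : G.IsNonBacktracking k (fun j => v (k - j)) := by
  refine ⟨fun j hj => ?_, fun j hj => ?_⟩
  · have := (h.1 (k - (j + 1)) (by omega)).symm
    rwa [show k - (j + 1) + 1 = k - j by omega] at this
  · have := (h.2 (k - (j + 2)) (by omega)).symm
    rwa [show k - (j + 2) + 2 = k - j by omega] at this

theorem exists_isPath_not_mem_support (hG : G.IsAcyclic) (h : G.IsNonBacktracking (k + 1) v) :
    ∃ p : G.Walk (v 1) (v (k + 1)), p.IsPath ∧ v 0 ∉ p.support := by
  induction k generalizing v with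
  | zero => exact ⟨.nil, .nil, by simpa using (h.1 0 (by omega)).ne⟩
  | succ k ih =>
    obtain ⟨p, hp, hv1⟩ := ih h.tail
    have hq : (Walk.cons (h.1 1 (by omega)) p).IsPath := hp.cons hv1
    refine ⟨_, hq, fun hv0 => h.2 0 (by omega) ?_⟩
    simpa using (hG.eq_snd_of_adj_start hq (h.1 0 (by omega)).symm hv0).symm

theorem reachable_deleteEdges (hG : G.IsAcyclic) (h : G.IsNonBacktracking (k + 1) v) :
    (G.deleteEdges {s(v 0, v 1)}).Reachable (v 1) (v (k + 1)) := by
  obtain ⟨p, -, hv0⟩ := h.exists_isPath_not_mem_support hG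
  exact reachable_deleteEdges_iff_exists_walk.2
    ⟨p, fun he => hv0 (p.fst_mem_support_of_mem_edges he)⟩

end IsNonBacktracking

end NonBacktracking

end SimpleGraph

open SimpleGraph in
theorem IsGreenDel.isGreen_deleteEdges {V : Type*} [DecidableEq V] {G : SimpleGraph V}
    [G.LocallyFinite] {a b : V} {z : ℂ} {g : V → V → ℂ} (hg : IsGreenDel G a b z g) :
    IsGreen (G.deleteEdges {s(a, b)}) z g := by
  refine ⟨hg.1, fun x y => ?_⟩
  rw [← hg.2 x y, neighborFinset_deleteEdges_singleton, sum_filter]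
  simp_rw [ne_eq, Sym2.eq_iff, ite_not]

namespace IsGreen

open SimpleGraph

variable {V : Type*} [DecidableEq V] {G : SimpleGraph V} [G.LocallyFinite] {D : ℕ} {z : ℂ}
  {g : V → V → ℂ}

theorem memℓp (hg : IsGreen G z g) (y : V) : Memℓp (fun x => g x y) 2 :=
  memℓp_two_iff.2 (hg.1 y)

theorem sum_neighborFinset (hg : IsGreen G z g) (x y : V) :
    ∑ u ∈ G.neighborFinset x, g u y = z * g x y + if x = y then 1 else 0 := by
  linear_combination hg.2 x y

theorem symm (hD : ∀ x, G.degree x ≤ D) (hg : IsGreen G z g) (p q : V) :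
    g p q = g q p := by
  have key := tsum_mul_sum_neighborFinset_comm hD (hg.memℓp p) (hg.memℓp q)
  have hleft : ∀ x, g x p * ∑ u ∈ G.neighborFinset x, g u q =
      z * (g x p * g x q) + if x = q then g q p else 0 := fun x => by
    rw [hg.sum_neighborFinset]; split_ifs with h <;> simp [h] <;> ring
  have hright : ∀ x, (∑ u ∈ G.neighborFinset x, g u p) * g x q =
      z * (g x p * g x q) + if x = p then g p q else 0 := fun x => by
    rw [hg.sum_neighborFinset]; split_ifs with h <;> simp [h] <;> ring
  have hsum := ((hg.memℓp p).summable_mul (hg.memℓp q)).mul_left z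
  rw [tsum_congr hleft, tsum_congr hright, hsum.tsum_add (hasSum_ite_eq q _).summable,
    hsum.tsum_add (hasSum_ite_eq p _).summable, tsum_ite_eq, tsum_ite_eq] at key
  exact (add_left_cancel key).symm

theorem eq_zero_of_not_reachable (hD : ∀ x, G.degree x ≤ D)
    (hz : z.im ≠ 0) (hg : IsGreen G z g) {x y : V} (hxy : ¬ G.Reachable x y) : g x y = 0 := by
  classical
  let f u := if G.Reachable u y then 0 else g u y
  have hf : Memℓp f 2 := (hg.memℓp y).mono' fun u => by
    simp only [f]; split_ifs <;> simp
  have heig : ∀ u, ∑ w ∈ G.neighborFinset u, f w = z * f u := fun u => by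
    by_cases hu : G.Reachable u y
    · have hw : ∀ w ∈ G.neighborFinset u, G.Reachable w y := fun w hw =>
        ((mem_neighborFinset _ _ _).1 hw).symm.reachable.trans hu
      simp [f, hu, sum_ite_of_true hw]
    · have hw : ∀ w ∈ G.neighborFinset u, ¬ G.Reachable w y := fun w hw h =>
        hu (((mem_neighborFinset _ _ _).1 hw).reachable.trans h)
      have huy : u ≠ y := fun h => hu (h ▸ .refl u)
      simp only [f, hu, if_false, sum_ite_of_false hw]
      rw [hg.sum_neighborFinset, if_neg huy, add_zero]
  simpa [f, hxy] using congrFun (eq_zero_of_sum_neighborFinset_eq_mul hD hz hf heig) x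

theorem apply_eq_neg_mul_of_isBridge (hD : ∀ x, G.degree x ≤ D) (hz : z.im ≠ 0)
    {Gr g : V → V → ℂ} (hGr : IsGreen G z Gr) {a b y : V} (hab : G.Adj a b)
    (hg : IsGreen (G.deleteEdges {s(a, b)}) z g) (hbridge : G.IsBridge s(a, b))
    (hy : (G.deleteEdges {s(a, b)}).Reachable b y) :
    Gr a y = -g a a * Gr b y := by
  have hD' x := (degree_deleteEdges_singleton_le s(a, b) x).trans (hD x)
  -- `F` is the `y`-th column of `Gr - g + g (A - A') Gr`, an `ℓ²` eigenfunction of `A'`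
  let F x := Gr x y - g x y + Gr b y * g x a + Gr a y * g x b
  have hF : Memℓp F 2 :=
    (((hGr.memℓp y).sub (hg.memℓp y)).add ((hg.memℓp a).const_mul _)).add
      ((hg.memℓp b).const_mul _)
  have heig x : ∑ u ∈ (G.deleteEdges {s(a, b)}).neighborFinset x, F u = z * F x := by
    have hsplit := sum_neighborFinset_deleteEdges hab x fun u => Gr u y
    rw [hGr.sum_neighborFinset] at hsplit
    simp only [F, sum_add_distrib, sum_sub_distrib, ← mul_sum, hg.sum_neighborFinset, mul_add,
      mul_ite, mul_one, mul_zero]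
    linear_combination hsplit
  have hFa := congrFun (eq_zero_of_sum_neighborFinset_eq_mul hD' hz hF heig) a
  have hay : ¬ (G.deleteEdges {s(a, b)}).Reachable a y := fun h => hbridge (h.trans hy.symm)
  simp only [F, hg.eq_zero_of_not_reachable hD' hz hay,
    hg.eq_zero_of_not_reachable hD' hz hbridge, Pi.zero_apply] at hFa
  linear_combination hFa

theorem apply_eq_prod_mul (hG : G.IsAcyclic) (hD : ∀ x, G.degree x ≤ D) (hz : z.im ≠ 0)
    {Gr : V → V → ℂ} (hGr : IsGreen G z Gr) {gdel : V → V → V → V → ℂ}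
    (hg : ∀ a b, G.Adj a b → IsGreen (G.deleteEdges {s(a, b)}) z (gdel a b)) {k : ℕ}
    {v : ℕ → V} (hv : G.IsNonBacktracking k v) :
    Gr (v 0) (v k) = (∏ j ∈ range k, -gdel (v (j + 1)) (v j) (v j) (v j)) * Gr (v k) (v k) := by
  induction k generalizing v with
  | zero => simp
  | succ k ih =>
    have hab := hv.1 0 (by omega)
    have hdel : IsGreen (G.deleteEdges {s(v 0, v 1)}) z (gdel (v 1) (v 0)) :=
      Sym2.eq_swap ▸ hg _ _ hab.symm
    rw [hGr.apply_eq_neg_mul_of_isBridge hD hz hab hdel (isAcyclic_iff_forall_adj_isBridge.1 hG hab)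
      (hv.reachable_deleteEdges hG), ih hv.tail, prod_range_succ']
    ring

end IsGreen

/-- Lemma, multiplicative formula: for a non-backtracking path
`(v_0, …, v_k)` in the tree `T`,
`G(v_0, v_k; z) = -(∏_{j<k} ζ^z(v_{j+1}, v_j)) / (2m^z(v_k))
               = -(∏_{j<k} ζ^z(v_j, v_{j+1})) / (2m^z(v_0))`. -/
theorem green_product_formula {V : Type*} [DecidableEq V]
    (T : SimpleGraph V) [T.LocallyFinite] (htree : T.IsTree)
    (D : ℕ) (hdeg : ∀ v : V, 2 ≤ T.degree v ∧ T.degree v ≤ D)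
    (z : ℂ) (hz : z.im ≠ 0)
    (Gr : V → V → ℂ) (hGr : IsGreen T z Gr)
    (gdel : V → V → V → V → ℂ)
    (hgdel : ∀ a b : V, T.Adj a b → IsGreenDel T a b z (gdel a b))
    (zeta : V → V → ℂ) (hzeta : ∀ a b : V, zeta a b = - gdel a b b b)
    (twoM : V → ℂ) (htwoM : ∀ v : V, twoM v = - (Gr v v)⁻¹)
    (k : ℕ) (v : ℕ → V)
    (hadj : ∀ j < k, T.Adj (v j) (v (j + 1)))
    (hnb : ∀ j, j + 2 ≤ k → v (j + 2) ≠ v j) :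
    Gr (v 0) (v k) = - (∏ j ∈ Finset.range k, zeta (v (j + 1)) (v j)) / twoM (v k) ∧
    Gr (v 0) (v k) = - (∏ j ∈ Finset.range k, zeta (v j) (v (j + 1))) / twoM (v 0) := by
  have hD x := (hdeg x).2
  have hv : T.IsNonBacktracking k v := ⟨hadj, hnb⟩
  have hprod {w : ℕ → V} (hw : T.IsNonBacktracking k w) :=
    hGr.apply_eq_prod_mul htree.2 hD hz (fun a b hab => (hgdel a b hab).isGreen_deleteEdges) hw
  simp only [hzeta, htwoM, neg_div_neg_eq, div_inv_eq_mul]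
  refine ⟨hprod hv, ?_⟩
  have hrev := hprod hv.reverse
  simp only [Nat.sub_zero, Nat.sub_self] at hrev
  rw [hGr.symm hD, hrev,
    ← prod_range_reflect (fun j => -gdel (v j) (v (j + 1)) (v (j + 1)) (v (j + 1)))]
  congr 1
  refine prod_congr rfl fun j hj => ?_
  rw [mem_range] at hj
  rw [show k - (j + 1) = k - 1 - j by omega, show k - j = k - 1 - j + 1 by omega]
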